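/- arXiv:2107.14278 — 6 statements merged into one kernel-verified Lean document; each statement's English description precedes it below -/
import Mathlib

section
/- Let b, c be real numbers with b² - 4c ≥ 0, and let h(x) = (1 - (b-2a)x - √(1 + 2(2a-b)x + (b²-4c)x²)) / (2x²(a² - ab + c)) for real a with a² - ab + c ≠ 0, defined as a formal power series (the square root being the unique power series with constant term 1 whose square is 1 + 2(2a-b)x + (b²-4c)x²). Then h satisfies the functional equation h(x) = 1 / (1 - (b-2a)x - (a² - ab + c)x²·h(x)). -/
open PowerSeries

/-- Quadratic formula read backwards: `y = (p - √(p² - 4e)) / (2e)` is a root of `e y² - p y + 1`. -/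
theorem mul_sub_mul_eq_one_of_two_mul_eq_sub_sqrt {R : Type*} [CommRing R] [IsDomain R]
    {p s y e : R} (he : 4 * e ≠ 0) (hy : 2 * e * y = p - s) (hs : s ^ 2 = p ^ 2 - 4 * e) :
    y * (p - e * y) = 1 := by
  refine mul_left_cancel₀ he ?_
  linear_combination (p + s - 2 * e * y) * hy - hs

theorem thron_tail_functional_equation_general (a b c : ℝ)
    (hd : a ^ 2 - a * b + c ≠ 0)
    (S h : PowerSeries ℝ)
    (hS : S ^ 2 = 1 + C (2 * (2 * a - b)) * X + C (b ^ 2 - 4 * c) * X ^ 2)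
    (hh : C (2 * (a ^ 2 - a * b + c)) * X ^ 2 * h = 1 - C (b - 2 * a) * X - S) :
    h * (1 - C (b - 2 * a) * X - C (a ^ 2 - a * b + c) * X ^ 2 * h) = 1 := by
  have he : 4 * (C (a ^ 2 - a * b + c) * X ^ 2 : ℝ⟦X⟧) ≠ 0 := by
    rw [← mul_assoc, ← map_ofNat C 4, ← map_mul]
    exact mul_ne_zero ((map_ne_zero_iff C C_injective).mpr (mul_ne_zero four_ne_zero hd))
      (pow_ne_zero 2 X_ne_zero)
  refine mul_sub_mul_eq_one_of_two_mul_eq_sub_sqrt (s := S) he ?_ ?_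
  · rw [← hh, map_mul, map_ofNat]
    ring
  · simp only [hS, map_mul, map_add, map_sub, map_pow, map_ofNat]
    ring

/-- The power series `h(x) = (1-(b-2a)x-√(1+2(2a-b)x+(b²-4c)x²))/(2x²(a²-ab+c))`
satisfies `h = 1/(1-(b-2a)x-(a²-ab+c)x² h)`. -/
theorem thron_tail_functional_equation (a b c : ℝ)
    (hbc : b ^ 2 - 4 * c ≥ 0) (hd : a ^ 2 - a * b + c ≠ 0)
    (S h : PowerSeries ℝ) (hS0 : constantCoeff S = 1)
    (hS : S ^ 2 = 1 + C (2 * (2 * a - b)) * X + C (b ^ 2 - 4 * c) * X ^ 2)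
    (hh : C (2 * (a ^ 2 - a * b + c)) * X ^ 2 * h = 1 - C (b - 2 * a) * X - S) :
    h * (1 - C (b - 2 * a) * X - C (a ^ 2 - a * b + c) * X ^ 2 * h) = 1 :=
  thron_tail_functional_equation_general a b c hd S h hS hh
end

section
/- Let q, r, s be rational numbers and let u(x) be the unique formal power series with constant term 1 satisfying u(x) = 1/(1 - r·x - s·x·u(x)). Define F(x) = 1/(1 - q·x - s·x·u(x)). Then x·F(x) is the compositional inverse of the power series x·(1 + (q-r-s)x)/(1 + (2q-r)x + q(q-r)x²); that is, setting y = x·F(x), one has y·(1 + (q-r-s)y) = x·(1 + (2q-r)y + q(q-r)y²). -/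
/-!
Put `y = x F` and `v = s u y`. The equation for `F`, multiplied by `x`, reads
`x v = y - x (1 + q y)`; the equation for `u`, multiplied by `s y²`, reads
`v (y - r x y - x v) = s y²`. Substituting the first into the second gives
`(y - x (1 + q y)) (1 + (q - r) y) = s y²`, which is the claim expanded. No division by `x`
is needed, so the identity holds in any commutative ring.
-/

open PowerSeries

theorem reversion_relation_of_mul_eq_one {R : Type*} [CommRing R] (x q r s u F : R)
    (hu : u * (1 - r * x - s * x * u) = 1)
    (hF : F * (1 - q * x - s * x * u) = 1) :
    (x * F) * (1 + (q - r - s) * (x * F)) =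
      x * (1 + (2 * q - r) * (x * F) + q * (q - r) * (x * F) ^ 2) := by
  have hxv : x * (s * u * (x * F)) = x * F - x * (1 + q * (x * F)) := by
    linear_combination -x * hF
  have hv : s * u * (x * F) * (x * F - r * x * (x * F) - x * (s * u * (x * F))) =
      s * (x * F) ^ 2 := by
    linear_combination s * (x * F) ^ 2 * hu
  linear_combination hv - (1 + (q - r) * (x * F) - s * u * (x * F)) * hxv

theorem thron_revert_general (q r s : ℚ) (u F : PowerSeries ℚ)
    (hu : u * (1 - C r * X - C s * X * u) = 1)
    (hF : F * (1 - C q * X - C s * X * u) = 1) :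
    (X * F) * (1 + C (q - r - s) * (X * F)) =
      X * (1 + C (2 * q - r) * (X * F) + C (q * (q - r)) * (X * F) ^ 2) := by
  simpa only [map_sub, map_mul, map_ofNat] using
    reversion_relation_of_mul_eq_one X (C q) (C r) (C s) u F hu hF

/-- If `u = 1/(1-rx-sxu)` and `F = 1/(1-qx-sxu)`, then `x F(x)` is the compositional
inverse of `x(1+(q-r-s)x)/(1+(2q-r)x+q(q-r)x²)`. -/
theorem thron_revert (q r s : ℚ) (u F : PowerSeries ℚ)
    (hu0 : constantCoeff u = 1)
    (hu : u * (1 - C r * X - C s * X * u) = 1)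
    (hF : F * (1 - C q * X - C s * X * u) = 1) :
    (X * F) * (1 + C (q - r - s) * (X * F)) =
      X * (1 + C (2 * q - r) * (X * F) + C (q * (q - r)) * (X * F) ^ 2) :=
  thron_revert_general q r s u F hu hF
end

section
/- Let A(x) and B(x) be formal power series with constant term 1, and suppose B(x) = A(x)/(1 + x·A(x)) (B is the INVERT(-1) transform of A). Let R_A and R_B denote their revert transforms: R_A = (1/x)·Rev(x·A(x)), R_B = (1/x)·Rev(x·B(x)). Then the revert transform of B equals the binomial transform of the revert transform of A, i.e., R_B(x) = (1/(1-x))·R_A(x/(1-x)). -/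
open PowerSeries

/-- Composition of formal power series (valid when the second argument has zero
constant term). -/
noncomputable def psComp (f g : PowerSeries ℚ) : PowerSeries ℚ :=
  PowerSeries.mk fun n =>
    ∑ k ∈ Finset.range (n + 1), coeff k f * coeff n (g ^ k)

lemma coeff_psComp (f g : PowerSeries ℚ) (n : ℕ) :
    coeff n (psComp f g) = ∑ k ∈ Finset.range (n + 1), coeff k f * coeff n (g ^ k) := by
  simp [psComp]

lemma coeff_pow_eq_zero {g : PowerSeries ℚ} (hg : constantCoeff g = 0) :
    ∀ {k n : ℕ}, n < k → coeff n (g ^ k) = 0 := by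
  intro k
  induction k with
  | zero => intro n h; omega
  | succ k ih =>
    intro n h
    rw [pow_succ', PowerSeries.coeff_mul]
    apply Finset.sum_eq_zero
    intro p hp
    have hmem := Finset.HasAntidiagonal.mem_antidiagonal.mp hp
    rcases Nat.eq_zero_or_pos p.1 with h0 | h1
    · rw [h0, PowerSeries.coeff_zero_eq_constantCoeff, hg, zero_mul]
    · have : p.2 < k := by omega
      rw [ih this, mul_zero]

lemma constantCoeff_psComp (f g : PowerSeries ℚ) :
    constantCoeff (psComp f g) = constantCoeff f := by
  have := coeff_psComp f g 0
  simpa using this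

lemma coeff_aeval {g : PowerSeries ℚ} (hg : constantCoeff g = 0) (P : Polynomial ℚ) (n : ℕ) :
    coeff n (Polynomial.aeval g P) =
      ∑ k ∈ Finset.range (n + 1), P.coeff k * coeff n (g ^ k) := by
  set N := max (n + 1) (P.natDegree + 1) with hN
  have hdeg : P.natDegree < N := lt_of_lt_of_le (Nat.lt_succ_self _) (le_max_right _ _)
  rw [Polynomial.aeval_eq_sum_range' hdeg, map_sum]
  have h1 : ∀ i ∈ Finset.range N,
      coeff n (P.coeff i • g ^ i) = P.coeff i * coeff n (g ^ i) := by
    intro i _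
    rw [LinearMap.map_smul, smul_eq_mul]
  rw [Finset.sum_congr rfl h1]
  symm
  apply Finset.sum_subset
  · exact Finset.range_subset_range.mpr (le_max_left _ _)
  · intro i _ hi
    have : n < i := by
      simp only [Finset.mem_range, not_lt] at hi
      omega
    rw [coeff_pow_eq_zero hg this, mul_zero]

lemma coeff_psComp_trunc {g : PowerSeries ℚ} (hg : constantCoeff g = 0)
    (f : PowerSeries ℚ) {n m : ℕ} (hnm : n < m) :
    coeff n (psComp f g) = coeff n (Polynomial.aeval g (trunc m f)) := by
  rw [coeff_psComp, coeff_aeval hg]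
  refine Finset.sum_congr rfl fun k hk => ?_
  have hkm : k < m := lt_of_lt_of_le (Finset.mem_range.mp hk) (by omega)
  rw [coeff_trunc, if_pos hkm]

lemma psComp_mul {g : PowerSeries ℚ} (hg : constantCoeff g = 0) (f h : PowerSeries ℚ) :
    psComp (f * h) g = psComp f g * psComp h g := by
  ext n
  rw [coeff_psComp_trunc hg (f * h) (Nat.lt_succ_self n)]
  have key : coeff n (Polynomial.aeval g (trunc (n + 1) (f * h)))
      = coeff n (Polynomial.aeval g (trunc (n + 1) f * trunc (n + 1) h)) := by
    rw [coeff_aeval hg, coeff_aeval hg]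
    refine Finset.sum_congr rfl fun k hk => ?_
    have hkn : k < n + 1 := Finset.mem_range.mp hk
    congr 1
    rw [coeff_trunc, if_pos hkn, Polynomial.coeff_mul, PowerSeries.coeff_mul]
    refine Finset.sum_congr rfl fun p hp => ?_
    have hpk := Finset.HasAntidiagonal.mem_antidiagonal.mp hp
    rw [coeff_trunc, coeff_trunc, if_pos (by omega), if_pos (by omega)]
  rw [key, map_mul, PowerSeries.coeff_mul, PowerSeries.coeff_mul]
  refine Finset.sum_congr rfl fun p hp => ?_
  have hpn := Finset.HasAntidiagonal.mem_antidiagonal.mp hp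
  rw [← coeff_psComp_trunc hg f (show p.1 < n + 1 by omega),
    ← coeff_psComp_trunc hg h (show p.2 < n + 1 by omega)]

lemma psComp_one (g : PowerSeries ℚ) : psComp 1 g = 1 := by
  ext n
  rw [coeff_psComp]
  simp only [PowerSeries.coeff_one, ite_mul, one_mul, zero_mul, Finset.sum_ite_eq']
  simp

lemma psComp_X {g : PowerSeries ℚ} (hg : constantCoeff g = 0) : psComp X g = g := by
  ext n
  rw [coeff_psComp]
  simp only [PowerSeries.coeff_X, ite_mul, one_mul, zero_mul, Finset.sum_ite_eq']
  rcases Nat.eq_zero_or_pos n with h0 | h1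
  · subst h0
    simp [hg]
  · rw [if_pos (Finset.mem_range.mpr (by omega)), pow_one]

lemma psComp_add (f h g : PowerSeries ℚ) :
    psComp (f + h) g = psComp f g + psComp h g := by
  ext n
  simp [coeff_psComp, add_mul, Finset.sum_add_distrib]

lemma psComp_pow {g : PowerSeries ℚ} (hg : constantCoeff g = 0) (f : PowerSeries ℚ) (k : ℕ) :
    psComp (f ^ k) g = psComp f g ^ k := by
  induction k with
  | zero => simpa using psComp_one g
  | succ k ih => rw [pow_succ, pow_succ, psComp_mul hg, ih]

lemma psComp_inv {g v : PowerSeries ℚ} (hg : constantCoeff g = 0)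
    (hv : constantCoeff v ≠ 0) : psComp v⁻¹ g = (psComp v g)⁻¹ := by
  have h1 : psComp v g * psComp v⁻¹ g = 1 := by
    rw [← psComp_mul hg, PowerSeries.mul_inv_cancel v hv, psComp_one]
  have hv' : constantCoeff (psComp v g) ≠ 0 := by
    rw [constantCoeff_psComp]; exact hv
  exact (PowerSeries.eq_inv_iff_mul_eq_one hv').mpr (by rw [mul_comm]; exact h1)

lemma psComp_assoc {g h : PowerSeries ℚ} (hg : constantCoeff g = 0)
    (hh : constantCoeff h = 0) (f : PowerSeries ℚ) :
    psComp (psComp f g) h = psComp f (psComp g h) := by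
  ext n
  rw [coeff_psComp, coeff_psComp]
  have hrhs : ∀ k, coeff n (psComp g h ^ k) = coeff n (psComp (g ^ k) h) := by
    intro k; rw [psComp_pow hh]
  calc ∑ j ∈ Finset.range (n + 1), coeff j (psComp f g) * coeff n (h ^ j)
      = ∑ j ∈ Finset.range (n + 1), (∑ k ∈ Finset.range (n + 1),
          coeff k f * coeff j (g ^ k)) * coeff n (h ^ j) := by
        refine Finset.sum_congr rfl fun j hj => ?_
        congr 1
        rw [coeff_psComp]
        apply Finset.sum_subset
        · exact Finset.range_subset_range.mpr (by have := Finset.mem_range.mp hj; omega)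
        · intro k _ hk
          have : j < k := by
            simp only [Finset.mem_range, not_lt] at hk
            omega
          rw [coeff_pow_eq_zero hg this, mul_zero]
    _ = ∑ k ∈ Finset.range (n + 1), coeff k f *
          (∑ j ∈ Finset.range (n + 1), coeff j (g ^ k) * coeff n (h ^ j)) := by
        simp only [Finset.sum_mul]
        rw [Finset.sum_comm]
        simp only [Finset.mul_sum, mul_assoc]
    _ = ∑ k ∈ Finset.range (n + 1), coeff k f * coeff n (psComp g h ^ k) := by
        refine Finset.sum_congr rfl fun k _ => ?_
        rw [← psComp_pow hh, coeff_psComp]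

lemma psComp_right_unique {F g1 g2 : PowerSeries ℚ}
    (hF0 : constantCoeff F = 0) (hF1 : coeff 1 F = 1)
    (h1 : constantCoeff g1 = 0) (h2 : constantCoeff g2 = 0)
    (heq : psComp F g1 = psComp F g2) : g1 = g2 := by
  ext n
  induction n using Nat.strong_induction_on with
  | _ n ih =>
  rcases Nat.eq_zero_or_pos n with h0 | hn
  · subst h0
    rw [PowerSeries.coeff_zero_eq_constantCoeff, h1, h2]
  · have claim : ∀ k, ∀ m ≤ n, (m < n ∨ 2 ≤ k) →
        coeff m (g1 ^ k) = coeff m (g2 ^ k) := by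
      intro k
      induction k with
      | zero => intro m _ _; simp
      | succ k ihk =>
        intro m hm hcond
        rw [pow_succ', pow_succ', PowerSeries.coeff_mul, PowerSeries.coeff_mul]
        refine Finset.sum_congr rfl fun p hp => ?_
        have hpm := Finset.HasAntidiagonal.mem_antidiagonal.mp hp
        rcases Nat.eq_zero_or_pos p.1 with hp0 | hp1
        · rw [hp0, PowerSeries.coeff_zero_eq_constantCoeff, h1, h2, zero_mul, zero_mul]
        · by_cases hpn : p.1 = n
          · have hk1 : 1 ≤ k := by
              rcases hcond with hc | hc
              · omega
              · omega
            have hp2 : p.2 = 0 := by omega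
            have e1 : constantCoeff (g1 ^ k) = 0 := by
              rw [map_pow, h1, zero_pow (by omega)]
            have e2 : constantCoeff (g2 ^ k) = 0 := by
              rw [map_pow, h2, zero_pow (by omega)]
            rw [hp2, PowerSeries.coeff_zero_eq_constantCoeff, e1, e2, mul_zero, mul_zero]
          · have hlt : p.1 < n := by omega
            have e1 := ih p.1 hlt
            have e2 : coeff p.2 (g1 ^ k) = coeff p.2 (g2 ^ k) :=
              ihk p.2 (by omega) (Or.inl (by omega))
            rw [e1, e2]
    have hcoeff := congrArg (coeff n) heq
    rw [coeff_psComp, coeff_psComp] at hcoeff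
    have h1mem : 1 ∈ Finset.range (n + 1) := Finset.mem_range.mpr (by omega)
    rw [← Finset.add_sum_erase _ _ h1mem, ← Finset.add_sum_erase _ _ h1mem] at hcoeff
    have herase : ∑ k ∈ (Finset.range (n + 1)).erase 1, coeff k F * coeff n (g1 ^ k)
        = ∑ k ∈ (Finset.range (n + 1)).erase 1, coeff k F * coeff n (g2 ^ k) := by
      refine Finset.sum_congr rfl fun k hk => ?_
      have hk1 : k ≠ 1 := (Finset.mem_erase.mp hk).1
      have hkn : k < n + 1 := Finset.mem_range.mp (Finset.mem_erase.mp hk).2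
      rcases Nat.eq_zero_or_pos k with hk0 | hkpos
      · rw [hk0, PowerSeries.coeff_zero_eq_constantCoeff, hF0, zero_mul, zero_mul]
      · have : 2 ≤ k := by omega
        rw [claim k n le_rfl (Or.inr this)]
    rw [herase] at hcoeff
    have := add_right_cancel hcoeff
    rw [hF1, one_mul, one_mul, pow_one, pow_one] at this
    exact this

/-- If `B = A/(1+xA)` is the INVERT(-1) transform of `A`, then the revert
transform of `B` is the binomial transform of the revert transform of `A`:
`R_B(x) = (1/(1-x)) R_A(x/(1-x))`. -/
theorem revert_invert_eq_binomial_revert (A B RA RB : PowerSeries ℚ)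
    (hA0 : constantCoeff A = 1)
    (hB : B * (1 + X * A) = A)
    (hRA0 : constantCoeff RA = 1)
    (hRA : psComp (X * A) (X * RA) = X)
    (hRB0 : constantCoeff RB = 1)
    (hRB : psComp (X * B) (X * RB) = X) :
    RB = (1 - X)⁻¹ * psComp RA (X * (1 - X)⁻¹) := by
  have hXmul : ∀ f : PowerSeries ℚ, constantCoeff (X * f) = 0 := by
    intro f; simp
  set u : PowerSeries ℚ := X * (1 - X)⁻¹ with hu
  have hu0 : constantCoeff u = 0 := hXmul _
  have h1X : constantCoeff (1 - X : PowerSeries ℚ) ≠ 0 := by simp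
  have hinv : (1 - X : PowerSeries ℚ) * (1 - X)⁻¹ = 1 :=
    PowerSeries.mul_inv_cancel _ h1X
  have hinv' : ((1 - X : PowerSeries ℚ))⁻¹ * (1 - X) = 1 :=
    PowerSeries.inv_mul_cancel _ h1X
  have h1u : (1 + u : PowerSeries ℚ) = (1 - X)⁻¹ := by
    have hmul : (1 + u) * (1 - X) = 1 := by
      rw [hu, add_mul, one_mul, mul_assoc, hinv', mul_one, sub_add_cancel]
    exact (PowerSeries.eq_inv_iff_mul_eq_one h1X).mpr hmul
  have hinvinv : ((1 - X : PowerSeries ℚ)⁻¹)⁻¹ = 1 - X := by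
    have hc : constantCoeff ((1 - X : PowerSeries ℚ)⁻¹) ≠ 0 := by
      rw [PowerSeries.constantCoeff_inv]
      simp
    exact ((PowerSeries.eq_inv_iff_mul_eq_one hc).mpr hinv).symm
  have h1pX : constantCoeff (1 + X : PowerSeries ℚ) ≠ 0 := by simp
  have hwu : psComp (X * (1 + X)⁻¹) u = X := by
    rw [psComp_mul hu0, psComp_X hu0, psComp_inv hu0 h1pX, psComp_add, psComp_one,
      psComp_X hu0, h1u, hinvinv, hu, mul_assoc, hinv', mul_one]
  have hXA0 : constantCoeff (X * A) = 0 := hXmul A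
  have hXRA0 : constantCoeff (X * RA) = 0 := hXmul RA
  have hXRB0 : constantCoeff (X * RB) = 0 := hXmul RB
  have h1XA : constantCoeff (1 + X * A : PowerSeries ℚ) ≠ 0 := by
    simp [hXA0]
  have hB0 : constantCoeff B = 1 := by
    have := congrArg (constantCoeff) hB
    simpa [hA0] using this
  have hGw : X * B = psComp (X * (1 + X)⁻¹) (X * A) := by
    rw [psComp_mul hXA0, psComp_X hXA0, psComp_inv hXA0 h1pX, psComp_add, psComp_one,
      psComp_X hXA0]
    have hXB : (X * B) * (1 + X * A) = X * A := by
      rw [mul_assoc, hB]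
    calc X * B = (X * B) * ((1 + X * A) * (1 + X * A)⁻¹) := by
          rw [PowerSeries.mul_inv_cancel _ h1XA, mul_one]
      _ = ((X * B) * (1 + X * A)) * (1 + X * A)⁻¹ := by ring
      _ = (X * A) * (1 + X * A)⁻¹ := by rw [hXB]
  set g' : PowerSeries ℚ := psComp (X * RA) u with hg'
  have hg'0 : constantCoeff g' = 0 := by
    rw [hg', constantCoeff_psComp, hXRA0]
  have hkey : psComp (X * B) g' = X := by
    have inner : psComp (X * A) g' = u := by
      rw [hg', ← psComp_assoc hXRA0 hu0, hRA, psComp_X hu0]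
    rw [hGw, psComp_assoc hXA0 hg'0, inner, hwu]
  have hF1 : coeff 1 (X * B) = 1 := by
    rw [show (1 : ℕ) = 0 + 1 from rfl, PowerSeries.coeff_succ_X_mul,
      PowerSeries.coeff_zero_eq_constantCoeff, hB0]
  have huniq : X * RB = g' :=
    psComp_right_unique (hXmul B) hF1 hXRB0 hg'0 (hRB.trans hkey.symm)
  have hg'eq : g' = X * ((1 - X)⁻¹ * psComp RA u) := by
    rw [hg', psComp_mul hu0, psComp_X hu0, hu]
    ring
  rw [hg'eq] at huniq
  exact mul_left_cancel₀ PowerSeries.X_ne_zero huniq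
end

section
/- The Narayana generating function N(x,y) (satisfying N = 1 + (y+1)xN + yx²N²) admits the Thron-type representation N(x,y) = 1/(1 - x - y·x·v(x,y)), where v(x,y) is the unique power series with constant term 1 satisfying v = 1/(1 - (1-y)x - y·x·v). -/
/-!
Write `D = 1 - x - yxv`. Multiplying the equation of `N` by `D²` and using the equation of `v`
to eliminate `v²` shows that `t = ND` satisfies `(t - 1)·(D(1 - (y+1)x) - yx²(t + 1)) = 0`.
The second factor has constant term `1`, so it is a unit of the power series ring, and `t = 1`.
-/

open PowerSeries

namespace PowerSeries

variable {R : Type*} [CommRing R]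

theorem narayana_mul_thron_eq_one (y : R) {N v : R⟦X⟧}
    (hN : N = 1 + C (y + 1) * X * N + C y * X ^ 2 * N ^ 2)
    (hv : v * (1 - C (1 - y) * X - C y * X * v) = 1) :
    N * (1 - X - C y * X * v) = 1 := by
  rw [map_add, map_one] at hN
  rw [map_sub, map_one] at hv
  set D := 1 - X - C y * X * v
  set B := D * (1 - (C y + 1) * X) - C y * X ^ 2 * (N * D + 1)
  have hB : IsUnit B := by
    rw [isUnit_iff_constantCoeff]
    simp [B, D]
  have factored : (N * D - 1) * B = 0 := by
    linear_combination D ^ 2 * hN - C y * X * hv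
  exact sub_eq_zero.mp (hB.mul_left_eq_zero.mp factored)

end PowerSeries

theorem narayana_thron_general (N v : PowerSeries (Polynomial ℚ))
    (hN : N = 1 + C (Polynomial.X + 1) * X * N
        + C Polynomial.X * X ^ 2 * N ^ 2)
    (hv : v * (1 - C (1 - Polynomial.X) * X
        - C Polynomial.X * X * v) = 1) :
    N * (1 - X - C Polynomial.X * X * v) = 1 :=
  narayana_mul_thron_eq_one Polynomial.X hN hv

/-- The Narayana generating function `N = 1 + (y+1)xN + yx²N²` admits the
Thron-type representation `N = 1/(1 - x - yx v)` where
`v = 1/(1-(1-y)x-yxv)`. -/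
theorem narayana_thron (N v : PowerSeries (Polynomial ℚ))
    (hN0 : constantCoeff N = 1)
    (hN : N = 1 + C (Polynomial.X + 1) * X * N
        + C Polynomial.X * X ^ 2 * N ^ 2)
    (hv0 : constantCoeff v = 1)
    (hv : v * (1 - C (1 - Polynomial.X) * X
        - C Polynomial.X * X * v) = 1) :
    N * (1 - X - C Polynomial.X * X * v) = 1 :=
  narayana_thron_general N v hN hv
end

section
/- Let u be a parameter and let F(x) be the unique formal power series over ℚ(u) with constant term 1 satisfying F = 1/(1 - x - x²·h) where h satisfies h = 1/(1 - (u+1)x - x²·h) (Jacobi continued fraction J(1, u+1, u+1, …; 1, 1, 1, …)). Then x·F(x) is the compositional inverse of x·(1-ux)/(1-(u-1)x-(u-1)x²). -/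
open PowerSeries

theorem mul_one_sub_mul_eq_of_jacobi_fraction {R : Type*} [CommRing R] {x u h F : R}
    (hh : h * (1 - (u + 1) * x - x ^ 2 * h) = 1) (hF : F * (1 - x - x ^ 2 * h) = 1) :
    x * F * (1 - u * (x * F)) = x * (1 - (u - 1) * (x * F) - (u - 1) * (x * F) ^ 2) := by
  linear_combination (x ^ 3 * F ^ 2) * hh + (x - u * x ^ 2 * F - x ^ 3 * h * F) * hF

theorem consecutive_pattern_revert_general (h F : PowerSeries (Polynomial ℚ))
    (hh : h * (1 - C (Polynomial.X + 1) * X - X ^ 2 * h) = 1)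
    (hF : F * (1 - X - X ^ 2 * h) = 1) :
    (X * F) * (1 - C Polynomial.X * (X * F)) =
      X * (1 - C (Polynomial.X - 1) * (X * F)
        - C (Polynomial.X - 1) * (X * F) ^ 2) := by
  rw [map_add, map_one] at hh
  rw [map_sub, map_one]
  exact mul_one_sub_mul_eq_of_jacobi_fraction hh hF

/-- With `h = 1/(1-(u+1)x-x²h)` and `F = 1/(1-x-x²h)` (the Jacobi fraction
`J(1,u+1,u+1,…;1,1,…)`), `x F(x)` is the compositional inverse of
`x(1-ux)/(1-(u-1)x-(u-1)x²)`. -/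
theorem consecutive_pattern_revert (h F : PowerSeries (Polynomial ℚ))
    (hh0 : constantCoeff h = 1)
    (hh : h * (1 - C (Polynomial.X + 1) * X - X ^ 2 * h) = 1)
    (hF : F * (1 - X - X ^ 2 * h) = 1) :
    (X * F) * (1 - C Polynomial.X * (X * F)) =
      X * (1 - C (Polynomial.X - 1) * (X * F)
        - C (Polynomial.X - 1) * (X * F) ^ 2) :=
  consecutive_pattern_revert_general h F hh hF
end

section
/- The generating function F(x) of A033321 (binomial transform of Fine's numbers), defined as the revert transform of (1-2x)/(1-x-x²), satisfies the Jacobi continued fraction relation F = 1/(1 - x - x²·h) where h = 1/(1 - 3x - x²·h). Equivalently: if h is the unique power series with h(0)=1 satisfying h(1-3x-x²h)=1 and F = 1/(1-x-x²h), then y = xF satisfies y(1-2y) = x(1-y-y²). -/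
/-!
Put `D = 1 - x - x²h`, so that `F = 1/D`. The defining equation `h (1 - 3x - x²h) = 1` of `h`
says exactly that `D (1 + x - D) = x (2 - x)`. Dividing this quadratic by `D²` and writing
`D = x / y` with `y = xF` turns it into `y (1 - 2y) = x (1 - y - y²)`.
-/

open PowerSeries

section CommRing

variable {R : Type*} [CommRing R]

theorem jFraction_denom_quadratic {x h : R} (hh : h * (1 - 3 * x - x ^ 2 * h) = 1) :
    (1 - x - x ^ 2 * h) * (1 + x - (1 - x - x ^ 2 * h)) = x * (2 - x) := by
  linear_combination x ^ 2 * hh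

theorem reversion_identity_of_denom_quadratic {x D F : R} (hF : F * D = 1)
    (hD : D * (1 + x - D) = x * (2 - x)) :
    (x * F) * (1 - 2 * (x * F)) = x * (1 - x * F - (x * F) ^ 2) := by
  linear_combination (x * F ^ 2) * hD + (x * F * D - x * (1 + x) * F + x) * hF

end CommRing

theorem A033321_revert_general (h F : PowerSeries ℚ)
    (hh : h * (1 - 3 * X - X ^ 2 * h) = 1)
    (hF : F * (1 - X - X ^ 2 * h) = 1) :
    (X * F) * (1 - 2 * (X * F)) = X * (1 - (X * F) - (X * F) ^ 2) :=
  reversion_identity_of_denom_quadratic hF (jFraction_denom_quadratic hh)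

/-- With `h = 1/(1-3x-x²h)` and `F = 1/(1-x-x²h)`, the series `F` is the
revert transform of `(1-2x)/(1-x-x²)` (A033321): `y = xF` satisfies
`y(1-2y) = x(1-y-y²)`. -/
theorem A033321_revert (h F : PowerSeries ℚ)
    (hh0 : constantCoeff h = 1)
    (hh : h * (1 - 3 * X - X ^ 2 * h) = 1)
    (hF : F * (1 - X - X ^ 2 * h) = 1) :
    (X * F) * (1 - 2 * (X * F)) = X * (1 - (X * F) - (X * F) ^ 2) :=
  A033321_revert_general h F hh hF
end
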